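/- arXiv:2112.10293 — 5 statements merged into one kernel-verified Lean document; each statement's English description precedes it below -/
import Mathlib

section
/- Let a>0, b>0, N≤3, and for C>0 let t(C) be the unique positive root of a t² + b C t^{4-N} = 1. Then t(C) · (b C)^{1/(4-N)} → 1 as C → +∞; equivalently, t(C) is asymptotic to (1/(bC))^{1/(4-N)} as C → +∞. -/
/-!
From the equation, `t(C)^m · bC = 1 - a t(C)^2 ≤ 1` with `m = 4 - N`, so `t(C) → 0`. Hence
`t(C) · (bC)^(1/m) = (t(C)^m · bC)^(1/m) = (1 - a t(C)^2)^(1/m) → 1`.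
-/

open Filter Real Topology

theorem Real.mul_rpow_inv_natCast {t s : ℝ} {m : ℕ} (ht : 0 ≤ t) (hs : 0 ≤ s) (hm : m ≠ 0) :
    t * s ^ (m⁻¹ : ℝ) = (t ^ m * s) ^ (m⁻¹ : ℝ) := by
  rw [Real.mul_rpow (by positivity) hs, pow_rpow_inv_natCast ht hm]

theorem tendsto_zero_of_pow_mul_le_one {α : Type*} {l : Filter α} {f g : α → ℝ} {m : ℕ}
    (hm : m ≠ 0) (hf : ∀ᶠ x in l, 0 ≤ f x) (hg : Tendsto g l atTop)
    (hfg : ∀ᶠ x in l, f x ^ m * g x ≤ 1) : Tendsto f l (𝓝 0) := by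
  have hpow : Tendsto (fun x => f x ^ m) l (𝓝 0) := by
    refine tendsto_of_tendsto_of_tendsto_of_le_of_le' tendsto_const_nhds
      (tendsto_inv_atTop_zero.comp hg) (hf.mono fun x hx => by positivity) ?_
    filter_upwards [hfg, hg.eventually_gt_atTop 0] with x hx hgx
    rwa [Function.comp_apply, inv_eq_one_div, le_div_iff₀ hgx]
  have hroot := hpow.rpow_const (p := (m⁻¹ : ℝ)) (Or.inr (by positivity))
  rw [zero_rpow (by positivity)] at hroot
  refine hroot.congr' ?_
  filter_upwards [hf] with x hx
  exact pow_rpow_inv_natCast hx hm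

theorem stmt_4_general (a b : ℝ) (N : ℕ) (ha : 0 < a) (hb : 0 < b)
    (hN3 : N ≤ 3) (T : ℝ → ℝ)
    (hT : ∀ C > (0:ℝ), 0 < T C ∧ a * (T C) ^ 2 + b * C * (T C) ^ (4 - N) = 1) :
    Filter.Tendsto (fun C : ℝ => T C * (b * C) ^ ((1:ℝ) / (4 - (N:ℝ))))
      Filter.atTop (nhds 1) := by
  set m := 4 - N with hm_def
  have hm : m ≠ 0 := by omega
  have hexp : (1:ℝ) / (4 - (N:ℝ)) = (m:ℝ)⁻¹ := by
    rw [one_div, hm_def, Nat.cast_sub (by omega)]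
    norm_num
  have hrel : ∀ C > (0:ℝ), T C ^ m * (b * C) = 1 - a * T C ^ 2 := fun C hC => by
    linear_combination (hT C hC).2
  have hT0 : Tendsto T atTop (𝓝 0) := by
    refine tendsto_zero_of_pow_mul_le_one hm ?_ (tendsto_id.const_mul_atTop hb) ?_ <;>
      filter_upwards [eventually_gt_atTop 0] with C hC
    · exact (hT C hC).1.le
    · rw [id, hrel C hC]
      nlinarith [hT C hC]
  have hlim : Tendsto (fun C => (1 - a * T C ^ 2) ^ (m:ℝ)⁻¹) atTop (𝓝 1) := by
    have h := ((tendsto_const_nhds (x := (1:ℝ))).sub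
      ((tendsto_const_nhds (x := a)).mul (hT0.pow 2))).rpow_const
      (p := (m:ℝ)⁻¹) (Or.inr (by positivity))
    simpa using h
  rw [hexp]
  refine hlim.congr' ?_
  filter_upwards [eventually_gt_atTop 0] with C hC
  rw [Real.mul_rpow_inv_natCast (hT C hC).1.le (by positivity) hm, hrel C hC]

theorem stmt_4 (a b : ℝ) (N : ℕ) (ha : 0 < a) (hb : 0 < b)
    (hN1 : 1 ≤ N) (hN3 : N ≤ 3) (T : ℝ → ℝ)
    (hT : ∀ C > (0:ℝ), 0 < T C ∧ a * (T C) ^ 2 + b * C * (T C) ^ (4 - N) = 1) :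
    Filter.Tendsto (fun C : ℝ => T C * (b * C) ^ ((1:ℝ) / (4 - (N:ℝ))))
      Filter.atTop (nhds 1) :=
  stmt_4_general a b N ha hb hN3 T hT
end

section
/- Let a>0, b>0, N≤3, and suppose (Cₙ) is a sequence of nonnegative reals converging to C₀ ≥ 0. If tₙ > 0 satisfies a tₙ² + b Cₙ tₙ^{4-N} = 1 for each n, then (tₙ) is bounded and converges to the unique positive root t₀ of a t² + b C₀ t^{4-N} = 1. -/
/-!
With `m = 4 - N ≥ 1` and `c ≥ 0`, the map `s ↦ a s² + c sᵐ` is continuous, strictly increasing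
on `[0, ∞)` and vanishes at `0`, so it takes the value `1` at exactly one `t₀ > 0`. Each equation
forces `a tₙ² ≤ 1`, which bounds `tₙ`. Evaluating the limit map at `tₙ` gives
`1 + b (C₀ - Cₙ) tₙᵐ → 1`, and a strictly monotone map pulls this convergence back to `tₙ → t₀`.
-/

open Filter Set Topology

theorem StrictMonoOn.tendsto_of_tendsto_comp {α β ι : Type*} [LinearOrder α] [TopologicalSpace α]
    [OrderTopology α] [LinearOrder β] [TopologicalSpace β] [OrderTopology β]
    {g : α → β} {x₀ c : α} {x : ι → α} {l : Filter ι}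
    (hg : StrictMonoOn g (Ici c)) (hx : ∀ i, c ≤ x i) (hx₀ : c ≤ x₀)
    (hgx : Tendsto (g ∘ x) l (𝓝 (g x₀))) : Tendsto x l (𝓝 x₀) := by
  refine tendsto_order.2 ⟨fun y hy => ?_, fun y hy => ?_⟩
  · rcases lt_or_ge y c with hyc | hcy
    · exact Eventually.of_forall fun i => hyc.trans_le (hx i)
    · have hgy : g y < g x₀ := (hg.lt_iff_lt hcy hx₀).2 hy
      filter_upwards [(tendsto_order.1 hgx).1 _ hgy] with i hi
      exact (hg.lt_iff_lt hcy (hx i)).1 hi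
  · have hcy : c ≤ y := hx₀.trans hy.le
    have hgy : g x₀ < g y := (hg.lt_iff_lt hx₀ hcy).2 hy
    filter_upwards [(tendsto_order.1 hgx).2 _ hgy] with i hi
    exact (hg.lt_iff_lt (hx i) hcy).1 hi

/-- `s ↦ a s² + c sᵐ`; in the theorem `c = b C` and `m = 4 - N`. -/
def quadPowFn (a c : ℝ) (m : ℕ) (s : ℝ) : ℝ := a * s ^ 2 + c * s ^ m

section quadPowFn

variable {a c : ℝ} {m : ℕ}

@[fun_prop]
theorem continuous_quadPowFn (a c : ℝ) (m : ℕ) : Continuous (quadPowFn a c m) := by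
  unfold quadPowFn
  fun_prop

theorem strictMonoOn_quadPowFn (ha : 0 < a) (hc : 0 ≤ c) (m : ℕ) :
    StrictMonoOn (quadPowFn a c m) (Ici 0) := by
  intro x hx y hy hxy
  have hsq : a * x ^ 2 < a * y ^ 2 := by gcongr
  have hpow : c * x ^ m ≤ c * y ^ m := by gcongr
  exact add_lt_add_of_lt_of_le hsq hpow

theorem quadPowFn_zero (hm : m ≠ 0) : quadPowFn a c m 0 = 0 := by
  simp [quadPowFn, hm]

theorem exists_pos_quadPowFn_eq (ha : 0 < a) (hc : 0 ≤ c) (hm : m ≠ 0) {v : ℝ} (hv : 0 < v) :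
    ∃ s, 0 < s ∧ quadPowFn a c m s = v := by
  set r := √(v / a)
  have hr : 0 ≤ r := Real.sqrt_nonneg _
  have hvr : v ≤ quadPowFn a c m r := by
    have har : a * r ^ 2 = v := by
      rw [Real.sq_sqrt (by positivity)]
      field_simp
    unfold quadPowFn
    nlinarith [pow_nonneg hr m, mul_nonneg hc (pow_nonneg hr m)]
  obtain ⟨s, hs, hsv⟩ := intermediate_value_Icc hr (continuous_quadPowFn a c m).continuousOn
    ⟨(quadPowFn_zero hm).trans_le hv.le, hvr⟩
  refine ⟨s, hs.1.lt_of_ne ?_, hsv⟩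
  rintro rfl
  rw [quadPowFn_zero hm] at hsv
  exact hv.ne hsv

theorem abs_le_sqrt_of_quadPowFn_eq_one (ha : 0 < a) (hc : 0 ≤ c) {s : ℝ} (hs : 0 ≤ s)
    (h : quadPowFn a c m s = 1) : |s| ≤ √(1 / a) := by
  refine Real.abs_le_sqrt ?_
  rw [le_div_iff₀ ha]
  unfold quadPowFn at h
  nlinarith [mul_nonneg hc (pow_nonneg hs m)]

theorem tendsto_quadPowFn_of_tendsto {u : ℕ → ℝ} {u₀ : ℝ} {s : ℕ → ℝ} {M : ℝ}
    (hu : Tendsto u atTop (𝓝 u₀)) (hs : ∀ n, |s n| ≤ M)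
    (h : ∀ n, quadPowFn a (u n) m (s n) = 1) :
    Tendsto (fun n => quadPowFn a u₀ m (s n)) atTop (𝓝 1) := by
  have hdiff : ∀ n, quadPowFn a u₀ m (s n) = 1 + (u₀ - u n) * s n ^ m := fun n => by
    rw [← h n]
    unfold quadPowFn
    ring
  have hpow : IsBoundedUnder (· ≤ ·) atTop (fun n => ‖s n ^ m‖) :=
    isBoundedUnder_of ⟨M ^ m, fun n => by
      rw [norm_pow, Real.norm_eq_abs]
      exact pow_le_pow_left₀ (abs_nonneg _) (hs n) m⟩
  have hzero : Tendsto (fun n => (u₀ - u n) * s n ^ m) atTop (𝓝 0) := by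
    refine Tendsto.zero_mul_isBoundedUnder_le ?_ hpow
    simpa using (tendsto_const_nhds (x := u₀)).sub hu
  simpa [hdiff] using tendsto_const_nhds.add hzero

end quadPowFn

theorem stmt_5_general (a b : ℝ) (N : ℕ) (ha : 0 < a) (hb : 0 < b)
    (hN3 : N ≤ 3) (C : ℕ → ℝ) (C₀ : ℝ)
    (hCnn : ∀ n, 0 ≤ C n) (hC₀ : 0 ≤ C₀)
    (hCconv : Filter.Tendsto C Filter.atTop (nhds C₀))
    (t : ℕ → ℝ) (ht : ∀ n, 0 < t n ∧ a * (t n) ^ 2 + b * C n * (t n) ^ (4 - N) = 1) :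
    (∃ M : ℝ, ∀ n, |t n| ≤ M) ∧
    ∃ t₀ : ℝ, 0 < t₀ ∧ a * t₀ ^ 2 + b * C₀ * t₀ ^ (4 - N) = 1 ∧
      (∀ s : ℝ, 0 < s → a * s ^ 2 + b * C₀ * s ^ (4 - N) = 1 → s = t₀) ∧
      Filter.Tendsto t Filter.atTop (nhds t₀) := by
  have hbC₀ : 0 ≤ b * C₀ := by positivity
  have hbounded : ∀ n, |t n| ≤ √(1 / a) := fun n =>
    abs_le_sqrt_of_quadPowFn_eq_one ha (by have := hCnn n; positivity) (ht n).1.le (ht n).2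
  obtain ⟨t₀, ht₀, ht₀_eq⟩ := exists_pos_quadPowFn_eq ha hbC₀ (by omega : 4 - N ≠ 0) one_pos
  have hmono := strictMonoOn_quadPowFn ha hbC₀ (4 - N)
  refine ⟨⟨_, hbounded⟩, t₀, ht₀, ht₀_eq, fun s hs hs_eq => ?_, ?_⟩
  · exact hmono.injOn hs.le ht₀.le (hs_eq.trans ht₀_eq.symm)
  · refine hmono.tendsto_of_tendsto_comp (fun n => (ht n).1.le) ht₀.le ?_
    rw [ht₀_eq]
    exact tendsto_quadPowFn_of_tendsto (hCconv.const_mul b) hbounded fun n => (ht n).2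

theorem stmt_5 (a b : ℝ) (N : ℕ) (ha : 0 < a) (hb : 0 < b)
    (hN1 : 1 ≤ N) (hN3 : N ≤ 3) (C : ℕ → ℝ) (C₀ : ℝ)
    (hCnn : ∀ n, 0 ≤ C n) (hC₀ : 0 ≤ C₀)
    (hCconv : Filter.Tendsto C Filter.atTop (nhds C₀))
    (t : ℕ → ℝ) (ht : ∀ n, 0 < t n ∧ a * (t n) ^ 2 + b * C n * (t n) ^ (4 - N) = 1) :
    (∃ M : ℝ, ∀ n, |t n| ≤ M) ∧
    ∃ t₀ : ℝ, 0 < t₀ ∧ a * t₀ ^ 2 + b * C₀ * t₀ ^ (4 - N) = 1 ∧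
      (∀ s : ℝ, 0 < s → a * s ^ 2 + b * C₀ * s ^ (4 - N) = 1 → s = t₀) ∧
      Filter.Tendsto t Filter.atTop (nhds t₀) :=
  stmt_5_general a b N ha hb hN3 C C₀ hCnn hC₀ hCconv t ht
end

section
/- Let a>0, b>0, N ≥ 5, and C>0. If 2^{-2/(N-2)} (N-2) (N-4)^{-(N-4)/(N-2)} a^{(N-4)/(N-2)} b^{2/(N-2)} C^{2/(N-2)} < 1, then the equation a t² + b C t^{4-N} = 1 has exactly two positive roots t₁ < t₂, with t₁ < t* < t₂ where t* = (b(N-4)C/(2a))^{1/(N-2)}. -/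
theorem stmt_9 (a b C : ℝ) (N : ℕ) (ha : 0 < a) (hb : 0 < b) (hC : 0 < C)
    (hN : 5 ≤ N)
    (hsmall : (2:ℝ) ^ (-(2:ℝ) / ((N:ℝ) - 2)) * ((N:ℝ) - 2) *
        ((N:ℝ) - 4) ^ (-(((N:ℝ) - 4) / ((N:ℝ) - 2))) *
        a ^ (((N:ℝ) - 4) / ((N:ℝ) - 2)) * b ^ ((2:ℝ) / ((N:ℝ) - 2)) *
        C ^ ((2:ℝ) / ((N:ℝ) - 2)) < 1) :
    ∃ t₁ t₂ : ℝ, 0 < t₁ ∧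
      t₁ < (b * (N - 4) * C / (2 * a)) ^ ((1:ℝ) / ((N:ℝ) - 2)) ∧
      (b * (N - 4) * C / (2 * a)) ^ ((1:ℝ) / ((N:ℝ) - 2)) < t₂ ∧
      a * t₁ ^ 2 + b * C * t₁ ^ ((4:ℤ) - N) = 1 ∧
      a * t₂ ^ 2 + b * C * t₂ ^ ((4:ℤ) - N) = 1 ∧
      ∀ t : ℝ, 0 < t → a * t ^ 2 + b * C * t ^ ((4:ℤ) - N) = 1 → t = t₁ ∨ t = t₂ := by
  have hn5 : (5:ℝ) ≤ (N:ℝ) := by exact_mod_cast hN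
  set n : ℝ := (N:ℝ) with hn
  have hn2 : (0:ℝ) < n - 2 := by linarith
  have hn4 : (0:ℝ) < n - 4 := by linarith
  set r : ℝ := b * (n - 4) * C / (2 * a) with hr
  have hrpos : 0 < r := by positivity
  set T : ℝ := r ^ ((1:ℝ) / (n - 2)) with hTdef
  have hTpos : 0 < T := Real.rpow_pos_of_pos hrpos _
  set m : ℤ := (4:ℤ) - N with hm
  set F : ℝ → ℝ := fun t => a * t ^ 2 + b * C * t ^ m with hF
  -- cast facts
  have hcast2 : ((N - 2 : ℕ) : ℝ) = n - 2 := by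
    have : ((N - 2 : ℕ) : ℝ) = (N:ℝ) - 2 := by
      have h2 : (2:ℕ) ≤ N := by omega
      push_cast [h2]; ring
    simpa [hn] using this
  -- T ^ (N-2) = r  (natural power)
  have hTpow : T ^ (N - 2 : ℕ) = r := by
    rw [← Real.rpow_natCast T (N - 2), hcast2, hTdef, ← Real.rpow_mul hrpos.le]
    rw [show (1:ℝ) / (n - 2) * (n - 2) = 1 by field_simp]
    exact Real.rpow_one r
  -- derivative of F
  have hder : ∀ t : ℝ, t ≠ 0 →
      HasDerivAt F (a * (2 * t) + b * C * ((m:ℝ) * t ^ (m - 1))) t := by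
    intro t ht
    have h1 : HasDerivAt (fun x : ℝ => a * x ^ 2) (a * (2 * t)) t := by
      simpa using (hasDerivAt_pow 2 t).const_mul a
    have h2 : HasDerivAt (fun x : ℝ => b * C * x ^ m)
        (b * C * ((m:ℝ) * t ^ (m - 1))) t :=
      (hasDerivAt_zpow m t (Or.inl ht)).const_mul (b * C)
    exact h1.add h2
  -- rewrite the derivative in a sign-friendly form
  have hφ : ∀ t : ℝ, 0 < t →
      a * (2 * t) + b * C * ((m:ℝ) * t ^ (m - 1)) =
        t ^ (m - 1) * (2 * a * t ^ (N - 2 : ℕ) - (n - 4) * (b * C)) := by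
    intro t ht
    have hz : t ^ (m - 1) * t ^ ((N:ℤ) - 2) = t := by
      rw [← zpow_add₀ ht.ne', hm, show (4:ℤ) - (N:ℤ) - 1 + ((N:ℤ) - 2) = 1 by ring,
        zpow_one]
    have hzn : (t : ℝ) ^ ((N:ℤ) - 2) = t ^ (N - 2 : ℕ) := by
      rw [← zpow_natCast t (N - 2)]
      congr 1
      omega
    have hmr : ((m:ℤ) : ℝ) = 4 - n := by
      rw [hm]; push_cast; ring
    have key : t ^ (m - 1) * (2 * a * t ^ (N - 2 : ℕ) - (n - 4) * (b * C))
        = 2 * a * (t ^ (m - 1) * t ^ ((N:ℤ) - 2)) - (n - 4) * (b * C) * t ^ (m - 1) := by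
      rw [← hzn]; ring
    rw [key, hz, hmr]; ring
  have hcont : ∀ t : ℝ, t ≠ 0 → ContinuousAt F t := fun t ht => (hder t ht).continuousAt
  have hr' : 2 * a * r = (n - 4) * (b * C) := by
    rw [hr]; field_simp
  have hanti : StrictAntiOn F (Set.Ioc 0 T) := by
    apply strictAntiOn_of_deriv_neg (convex_Ioc 0 T)
    · exact fun t ht => (hcont t (ne_of_gt ht.1)).continuousWithinAt
    · intro t ht
      rw [interior_Ioc] at ht
      have h0 : 0 < t := ht.1
      rw [(hder t h0.ne').deriv, hφ t h0]
      apply mul_neg_of_pos_of_neg (zpow_pos h0 _)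
      have hlt : t ^ (N - 2 : ℕ) < r := by
        rw [← hTpow]
        exact pow_lt_pow_left₀ ht.2 h0.le (by omega)
      nlinarith
  have hmono : StrictMonoOn F (Set.Ici T) := by
    apply strictMonoOn_of_deriv_pos (convex_Ici T)
    · exact fun t ht => (hcont t (lt_of_lt_of_le hTpos ht).ne').continuousWithinAt
    · intro t ht
      rw [interior_Ici] at ht
      have h0 : 0 < t := hTpos.trans ht
      rw [(hder t h0.ne').deriv, hφ t h0]
      apply mul_pos (zpow_pos h0 _)
      have hlt : r < t ^ (N - 2 : ℕ) := by
        rw [← hTpow]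
        exact pow_lt_pow_left₀ ht hTpos.le (by omega)
      nlinarith
  -- value at the minimum point
  have hTm : T ^ m = T ^ 2 / r := by
    have hzn : (T : ℝ) ^ ((N:ℤ) - 2) = T ^ (N - 2 : ℕ) := by
      rw [← zpow_natCast T (N - 2)]; congr 1; omega
    have h1 : T ^ m * r = T ^ 2 := by
      rw [← hTpow, ← hzn, ← zpow_add₀ hTpos.ne',
        show m + ((N:ℤ) - 2) = 2 by rw [hm]; ring, zpow_two, sq]
    rw [eq_div_iff hrpos.ne', h1]
  have hFT : F T = a * T ^ 2 * (n - 2) / (n - 4) := by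
    show a * T ^ 2 + b * C * T ^ m = a * T ^ 2 * (n - 2) / (n - 4)
    rw [hTm, hr]
    field_simp
    ring
  have hT2 : T ^ 2 = r ^ ((2:ℝ) / (n - 2)) := by
    rw [hTdef, ← Real.rpow_natCast (r ^ ((1:ℝ)/(n-2))) 2, ← Real.rpow_mul hrpos.le]
    congr 1
    push_cast; ring
  have he1 : (n - 4) / (n - 2) = 1 - (2:ℝ) / (n - 2) := by field_simp; ring
  have hreq : a * T ^ 2 * (n - 2) / (n - 4) =
      (2:ℝ) ^ (-(2:ℝ) / (n - 2)) * (n - 2) * (n - 4) ^ (-((n - 4) / (n - 2))) *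
        a ^ ((n - 4) / (n - 2)) * b ^ ((2:ℝ) / (n - 2)) * C ^ ((2:ℝ) / (n - 2)) := by
    rw [hT2, hr]
    rw [Real.div_rpow (by positivity) (by positivity)]
    rw [Real.mul_rpow (by positivity) (by positivity)]
    rw [Real.mul_rpow (by positivity) (by positivity)]
    rw [Real.mul_rpow (by positivity) (by positivity)]
    rw [he1, neg_div, Real.rpow_neg (by norm_num : (0:ℝ) ≤ 2),
        Real.rpow_neg hn4.le, Real.rpow_sub hn4, Real.rpow_sub ha,
        Real.rpow_one, Real.rpow_one]
    have h2e : (0:ℝ) < (2:ℝ) ^ ((2:ℝ)/(n-2)) := Real.rpow_pos_of_pos (by norm_num) _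
    have hae : (0:ℝ) < a ^ ((2:ℝ)/(n-2)) := Real.rpow_pos_of_pos ha _
    have hne : (0:ℝ) < (n-4) ^ ((2:ℝ)/(n-2)) := Real.rpow_pos_of_pos hn4 _
    field_simp
  have hFTlt : F T < 1 := by rw [hFT, hreq]; exact hsmall
  -- find t₁ on the left
  set s : ℝ := min (min 1 (b*C)) (T/2) with hs
  have hspos : 0 < s := lt_min (lt_min one_pos (by positivity)) (by positivity)
  have hsT : s < T := lt_of_le_of_lt (min_le_right _ _) (by linarith)
  have hs1 : s ≤ 1 := le_trans (min_le_left _ _) (min_le_left _ _)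
  have hsbc : s ≤ b * C := le_trans (min_le_left _ _) (min_le_right _ _)
  have hFs : 1 < F s := by
    have h1 : s ^ (N - 4 : ℕ) ≤ s := pow_le_of_le_one hspos.le hs1 (by omega)
    have h2 : s ^ m = (s ^ (N - 4 : ℕ))⁻¹ := by
      rw [← zpow_natCast s (N - 4), ← zpow_neg]
      congr 1; omega
    have h3 : (0:ℝ) < s ^ (N - 4 : ℕ) := by positivity
    have h4 : s⁻¹ ≤ (s ^ (N-4:ℕ))⁻¹ := by
      apply inv_anti₀ h3 h1
    have h5 : (1:ℝ) ≤ b * C * s⁻¹ := by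
      rw [← one_div, mul_one_div, le_div_iff₀ hspos]; linarith
    have h6 : b * C * s⁻¹ ≤ b * C * s ^ m := by
      rw [h2]; exact mul_le_mul_of_nonneg_left h4 (by positivity)
    have h7 : 0 < a * s ^ 2 := by positivity
    show 1 < a * s ^ 2 + b * C * s ^ m
    linarith
  have hcIcc : ∀ u v : ℝ, 0 < u → ContinuousOn F (Set.Icc u v) := by
    intro u v hu
    exact fun t ht => (hcont t (lt_of_lt_of_le hu ht.1).ne').continuousWithinAt
  obtain ⟨t₁, ht₁mem, ht₁eq⟩ :=
    intermediate_value_Icc' hsT.le (hcIcc s T hspos) ⟨hFTlt.le, hFs.le⟩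
  have ht₁pos : 0 < t₁ := lt_of_lt_of_le hspos ht₁mem.1
  have ht₁T : t₁ < T := by
    rcases lt_or_eq_of_le ht₁mem.2 with h | h
    · exact h
    · exfalso; rw [h] at ht₁eq; linarith
  -- find t₂ on the right
  set M : ℝ := max (T + 1) (Real.sqrt a⁻¹) with hM
  have hTM : T < M := lt_of_lt_of_le (by linarith) (le_max_left _ _)
  have hM0 : 0 < M := hTpos.trans hTM
  have hFM : 1 < F M := by
    have h1 : Real.sqrt a⁻¹ ≤ M := le_max_right _ _
    have h2 : a⁻¹ ≤ M ^ 2 := by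
      calc a⁻¹ = Real.sqrt a⁻¹ ^ 2 := (Real.sq_sqrt (inv_nonneg.mpr ha.le)).symm
        _ ≤ M ^ 2 := pow_le_pow_left₀ (Real.sqrt_nonneg _) h1 2
    have h3 : (1:ℝ) ≤ a * M ^ 2 := by
      rw [← mul_inv_cancel₀ ha.ne']
      exact mul_le_mul_of_nonneg_left h2 ha.le
    have h4 : 0 < b * C * M ^ m := mul_pos (by positivity) (zpow_pos hM0 _)
    show 1 < a * M ^ 2 + b * C * M ^ m
    linarith
  obtain ⟨t₂, ht₂mem, ht₂eq⟩ :=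
    intermediate_value_Icc hTM.le (hcIcc T M hTpos) ⟨hFTlt.le, hFM.le⟩
  have ht₂T : T < t₂ := by
    rcases lt_or_eq_of_le ht₂mem.1 with h | h
    · exact h
    · exfalso; rw [← h] at ht₂eq; linarith
  refine ⟨t₁, t₂, ht₁pos, ht₁T, ht₂T, ht₁eq, ht₂eq, ?_⟩
  intro t ht htone
  have hFt : F t = 1 := htone
  rcases le_or_gt t T with h | h
  · left
    exact hanti.injOn ⟨ht, h⟩ ⟨ht₁pos, ht₁T.le⟩ (hFt.trans ht₁eq.symm)
  · right
    exact hmono.injOn h.le ht₂T.le (hFt.trans ht₂eq.symm)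
end

section
/- Let a>0, b>0, N ≤ 3, and suppose (Cₙ) is a sequence of nonnegative reals with Cₙ → +∞. If tₙ > 0 satisfies a tₙ² + b Cₙ tₙ^{4-N} = 1, then tₙ → 0 and b Cₙ tₙ^{4-N} → 1 as n → +∞. -/
/-! Since `a t² ≥ 0`, the equation gives `b Cₙ tₙ^(4-N) ≤ 1`, so `tₙ^(4-N) ≤ (b Cₙ)⁻¹ → 0`
and hence `tₙ → 0` because `4 - N ≥ 1`. Then `b Cₙ tₙ^(4-N) = 1 - a tₙ² → 1`. -/

open Filter Topology

lemma tendsto_nhds_zero_of_tendsto_pow {α R : Type*} [NormedDivisionRing R]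
    {l : Filter α} {x : α → R} {k : ℕ} (hk : k ≠ 0)
    (h : Tendsto (fun n => x n ^ k) l (𝓝 0)) : Tendsto x l (𝓝 0) := by
  rw [tendsto_zero_iff_norm_tendsto_zero] at h ⊢
  have hnorm : Tendsto (fun n => ‖x n‖ ^ k) l (𝓝 0) := by simpa only [norm_pow] using h
  have hroot := hnorm.rpow_const (p := (k : ℝ)⁻¹) (Or.inr (by positivity))
  rw [Real.zero_rpow (by positivity)] at hroot
  exact hroot.congr fun n => Real.pow_rpow_inv_natCast (norm_nonneg _) hk

lemma tendsto_nhds_zero_of_mul_le_one {α : Type*} {l : Filter α} {f u : α → ℝ}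
    (hf : Tendsto f l atTop) (hu : ∀ᶠ n in l, 0 ≤ u n) (hfu : ∀ᶠ n in l, f n * u n ≤ 1) :
    Tendsto u l (𝓝 0) := by
  refine squeeze_zero' hu ?_ hf.inv_tendsto_atTop
  filter_upwards [hfu, hf.eventually_gt_atTop 0] with n hn hpos
  rwa [Pi.inv_apply, ← one_div, le_div_iff₀ hpos, mul_comm]

theorem stmt_15_general (a b : ℝ) (N : ℕ) (ha : 0 < a) (hb : 0 < b)
    (hN3 : N ≤ 3) (C : ℕ → ℝ)
    (hCtop : Filter.Tendsto C Filter.atTop Filter.atTop)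
    (t : ℕ → ℝ) (ht : ∀ n, 0 < t n ∧ a * (t n) ^ 2 + b * C n * (t n) ^ (4 - N) = 1) :
    Filter.Tendsto t Filter.atTop (nhds 0) ∧
    Filter.Tendsto (fun n => b * C n * (t n) ^ (4 - N)) Filter.atTop (nhds 1) := by
  have hk : 4 - N ≠ 0 := by omega
  have hle : ∀ n, b * C n * t n ^ (4 - N) ≤ 1 := fun n => by
    linarith [mul_nonneg ha.le (sq_nonneg (t n)), (ht n).2]
  have htk : Tendsto (fun n => t n ^ (4 - N)) atTop (𝓝 0) :=
    tendsto_nhds_zero_of_mul_le_one (hCtop.const_mul_atTop hb)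
      (.of_forall fun n => (pow_pos (ht n).1 _).le) (.of_forall hle)
  have ht0 : Tendsto t atTop (𝓝 0) := tendsto_nhds_zero_of_tendsto_pow hk htk
  refine ⟨ht0, ?_⟩
  have hlim : Tendsto (fun n => 1 - a * t n ^ 2) atTop (𝓝 (1 - a * 0 ^ 2)) :=
    tendsto_const_nhds.sub ((ht0.pow 2).const_mul a)
  rw [zero_pow two_ne_zero, mul_zero, sub_zero] at hlim
  exact hlim.congr fun n => by linarith [(ht n).2]

theorem stmt_15 (a b : ℝ) (N : ℕ) (ha : 0 < a) (hb : 0 < b)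
    (hN1 : 1 ≤ N) (hN3 : N ≤ 3) (C : ℕ → ℝ) (hCnn : ∀ n, 0 ≤ C n)
    (hCtop : Filter.Tendsto C Filter.atTop Filter.atTop)
    (t : ℕ → ℝ) (ht : ∀ n, 0 < t n ∧ a * (t n) ^ 2 + b * C n * (t n) ^ (4 - N) = 1) :
    Filter.Tendsto t Filter.atTop (nhds 0) ∧
    Filter.Tendsto (fun n => b * C n * (t n) ^ (4 - N)) Filter.atTop (nhds 1) :=
  stmt_15_general a b N ha hb hN3 C hCtop t ht
end

section
/- Let a>0, b>0, λ>0, N ≥ 1, and suppose v ∈ C²(ℝᴺ) ∩ H¹(ℝᴺ) solves -Δv + λv = g(v) in ℝᴺ, and t > 0 satisfies a t² + b ‖∇v‖₂² t^{4-N} = 1. Then u(x) := v(tx) solves -(a + b‖∇u‖₂²)Δu + λu = g(u) in ℝᴺ. -/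
open MeasureTheory

noncomputable def lap {N : ℕ} (f : EuclideanSpace ℝ (Fin N) → ℝ)
    (x : EuclideanSpace ℝ (Fin N)) : ℝ :=
  ∑ i : Fin N, fderiv ℝ (fun y => fderiv ℝ f y (EuclideanSpace.single i 1)) x
    (EuclideanSpace.single i 1)

lemma fderiv_comp_smul' {E F : Type*} [NormedAddCommGroup E] [NormedSpace ℝ E]
    [NormedAddCommGroup F] [NormedSpace ℝ F] {f : E → F} (hf : Differentiable ℝ f)
    (t : ℝ) (x : E) :
    fderiv ℝ (fun y => f (t • y)) x = t • fderiv ℝ f (t • x) := by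
  have h1 : (fun y : E => f (t • y)) = f ∘ (fun y => t • y) := rfl
  have hdg : DifferentiableAt ℝ (fun y : E => t • y) x :=
    (differentiable_id.const_smul t) x
  rw [h1, fderiv_comp x (hf _) hdg]
  have hcoe : (fun y : E => t • y) = ⇑(t • ContinuousLinearMap.id ℝ E) := by
    funext y; simp
  rw [hcoe, ContinuousLinearMap.fderiv]
  ext w
  simp

theorem stmt_19 (N : ℕ) (hN : 1 ≤ N) (a b lam : ℝ) (ha : 0 < a) (hb : 0 < b)
    (hlam : 0 < lam) (g : ℝ → ℝ) (hg : Continuous g)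
    (v : EuclideanSpace ℝ (Fin N) → ℝ) (hv : ContDiff ℝ 2 v)
    (hveq : ∀ x, -lap v x + lam * v x = g (v x))
    (t : ℝ) (ht : 0 < t)
    (halg : a * t ^ 2 + b * (∫ x, ‖fderiv ℝ v x‖ ^ 2) * t ^ ((4:ℤ) - N) = 1)
    (u : EuclideanSpace ℝ (Fin N) → ℝ) (hu : ∀ x, u x = v (t • x)) :
    ∀ x, -((a + b * ∫ y, ‖fderiv ℝ u y‖ ^ 2) * lap u x) + lam * u x = g (u x) := by
  have hue : u = fun x => v (t • x) := funext hu
  have hdv : Differentiable ℝ v := hv.differentiable (by norm_num)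
  have hdfv : Differentiable ℝ (fderiv ℝ v) :=
    (hv.fderiv_right (m := 1) (by norm_num)).differentiable (by norm_num)
  -- first derivative of u
  have hfu : ∀ x, fderiv ℝ u x = t • fderiv ℝ v (t • x) := by
    intro x
    rw [hue, fderiv_comp_smul' hdv]
  -- integral identity
  have hInt : (∫ y, ‖fderiv ℝ u y‖ ^ 2) = t ^ 2 * (t ^ (N : ℤ))⁻¹ * ∫ x, ‖fderiv ℝ v x‖ ^ 2 := by
    have h1 : (∫ y, ‖fderiv ℝ u y‖ ^ 2)
        = ∫ y, t ^ 2 * ‖fderiv ℝ v (t • y)‖ ^ 2 := by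
      congr 1; funext y
      rw [hfu y, norm_smul, mul_pow]
      simp [Real.norm_eq_abs, sq_abs]
    rw [h1, integral_const_mul]
    have h2 : (∫ y, ‖fderiv ℝ v (t • y)‖ ^ 2)
        = |((t : ℝ) ^ (Module.finrank ℝ (EuclideanSpace ℝ (Fin N))))⁻¹| •
          ∫ x, ‖fderiv ℝ v x‖ ^ 2 :=
      Measure.integral_comp_smul volume (fun z => ‖fderiv ℝ v z‖ ^ 2) t
    rw [h2]
    have hfr : Module.finrank ℝ (EuclideanSpace ℝ (Fin N)) = N := by
      simp [finrank_euclideanSpace]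
    rw [hfr, abs_of_nonneg (by positivity), smul_eq_mul]
    rw [zpow_natCast]
    ring
  -- coefficient identity
  have hcoef : a + b * ∫ y, ‖fderiv ℝ u y‖ ^ 2 = t ^ (-2 : ℤ) := by
    rw [hInt]
    have htne : t ≠ 0 := ne_of_gt ht
    have key : (a + b * (t ^ 2 * (t ^ (N : ℤ))⁻¹ * ∫ x, ‖fderiv ℝ v x‖ ^ 2)) * t ^ 2
        = a * t ^ 2 + b * (∫ x, ‖fderiv ℝ v x‖ ^ 2) * t ^ ((4:ℤ) - N) := by
      have : (t : ℝ) ^ ((4:ℤ) - N) = t ^ (4 : ℤ) * (t ^ (N : ℤ))⁻¹ := by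
        rw [← zpow_neg, ← zpow_add₀ htne, sub_eq_add_neg]
      rw [this]
      have h4 : (t : ℝ) ^ (4 : ℤ) = t ^ 2 * t ^ 2 := by
        rw [show (4:ℤ) = ((4:ℕ):ℤ) by rfl, zpow_natCast]; ring
      rw [h4]; ring
    have h2 : (a + b * (t ^ 2 * (t ^ (N : ℤ))⁻¹ * ∫ x, ‖fderiv ℝ v x‖ ^ 2)) * t ^ 2 = 1 := by
      rw [key, halg]
    field_simp [zpow_neg] at h2 ⊢
    linarith [h2]
  -- second derivatives
  have hlap : ∀ x, lap u x = t ^ 2 * lap v (t • x) := by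
    intro x
    unfold lap
    rw [Finset.mul_sum]
    refine Finset.sum_congr rfl (fun i _ => ?_)
    set e := EuclideanSpace.single i (1:ℝ)
    have hstep1 : (fun y => fderiv ℝ u y e) = fun y => t * (fderiv ℝ v (t • y) e) := by
      funext y; rw [hfu y]; simp
    rw [hstep1]
    have hdve : Differentiable ℝ (fun z => fderiv ℝ v z e) := by
      exact fun z => ((ContinuousLinearMap.apply ℝ ℝ e).differentiable.comp hdfv) z
    have hdcomp : Differentiable ℝ (fun y => fderiv ℝ v (t • y) e) := by
      exact fun y => (hdve.comp (differentiable_id.const_smul t)) y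
    rw [fderiv_const_mul (hdcomp x) t]
    have hstep2 : fderiv ℝ (fun y => fderiv ℝ v (t • y) e) x
        = t • fderiv ℝ (fun z => fderiv ℝ v z e) (t • x) :=
      fderiv_comp_smul' hdve t x
    rw [hstep2]
    simp only [ContinuousLinearMap.smul_apply, smul_eq_mul]
    ring
  intro x
  rw [hcoef, hlap x, hu x]
  have : (t : ℝ) ^ (-2 : ℤ) * (t ^ 2 * lap v (t • x)) = lap v (t • x) := by
    have htne : t ≠ 0 := ne_of_gt ht
    rw [zpow_neg, zpow_two]
    field_simp
  rw [this]
  exact hveq (t • x)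
end
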